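/- arXiv:2603.11506 — 3 statements merged into one kernel-verified Lean document; each statement's English description precedes it below -/
import Mathlib

section
/- Let λ = s/r and λ' = s'/r' be distinct rational numbers in lowest terms, with r, r' ≥ 1. Let L be the fraction field of the Witt vectors over a perfect field k of characteristic p, with Frobenius σ. Suppose a ∈ L satisfies p^{s r'} · a = σ^{r r'}(a) · p^{r s'}. Then a = 0. -/
/-- The Frobenius automorphism of `L = Frac(W(k))`. -/
noncomputable def fracWittFrobenius (p : ℕ) [Fact p.Prime] (k : Type*) [Field k] [CharP k p]
    [PerfectRing k p] :
    FractionRing (WittVector p k) ≃+* FractionRing (WittVector p k) :=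
  IsFractionRing.ringEquivOfRingEquiv (WittVector.frobeniusEquiv p k)

/-!
A ring automorphism of a discrete valuation ring preserves its valuation, since it maps a
uniformizer to a uniformizer; hence so does the induced automorphism `φ` of the fraction field.
With `n = s r' - r s' ≠ 0` the hypothesis reads `p ^ n * a = σ^{r r'} a`, and comparing
valuations of both sides gives `n + v(a) = v(a)`, which forces `a = 0`.
-/

namespace IsDiscreteValuationRing

variable {R K : Type*} [CommRing R] [IsDomain R] [IsDiscreteValuationRing R]
  [Field K] [Algebra R K] [IsFractionRing R K]

theorem addVal_ringEquiv (ψ : R ≃+* R) (x : R) : addVal R (ψ x) = addVal R x := by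
  rcases eq_or_ne x 0 with rfl | hx
  · simp
  obtain ⟨ϖ, hϖ⟩ := exists_irreducible R
  obtain ⟨n, u, rfl⟩ := eq_unit_mul_pow_irreducible hx hϖ
  rw [addVal_def' u hϖ n, map_mul, map_pow]
  exact addVal_def _ (Units.map ψ u) ((MulEquiv.irreducible_iff ψ.toMulEquiv).2 hϖ) n rfl

theorem addVal_eq_of_mul_eq_mul_ringEquivOfRingEquiv (ψ : R ≃+* R) {a : K} (ha : a ≠ 0)
    {b c : R}
    (h : algebraMap R K b * a = algebraMap R K c * IsFractionRing.ringEquivOfRingEquiv ψ a) :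
    addVal R b = addVal R c := by
  obtain ⟨x, y, hy, rfl⟩ := IsFractionRing.div_surjective (A := R) a
  have hy0 : algebraMap R K y ≠ 0 := IsFractionRing.to_map_ne_zero_of_mem_nonZeroDivisors hy
  have hψy0 : algebraMap R K (ψ y) ≠ 0 := by
    simpa [IsFractionRing.ringEquivOfRingEquiv_algebraMap] using
      (IsFractionRing.ringEquivOfRingEquiv ψ : K ≃+* K).map_ne_zero_iff.2 hy0
  have hx0 : x ≠ 0 := by rintro rfl; simp at ha
  rw [map_div₀, IsFractionRing.ringEquivOfRingEquiv_algebraMap,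
    IsFractionRing.ringEquivOfRingEquiv_algebraMap] at h
  have hR : b * x * ψ y = c * ψ x * y := by
    apply IsFractionRing.injective R K
    simp only [map_mul]
    field_simp at h
    linear_combination h
  have hxy : addVal R x + addVal R y ≠ ⊤ := by
    simp [addVal_eq_top_iff, hx0, nonZeroDivisors.ne_zero hy]
  have hval := congrArg (addVal R) hR
  simp only [addVal_mul, addVal_ringEquiv] at hval
  exact ENat.add_left_injective_of_ne_top hxy (by simpa only [add_assoc] using hval)

theorem eq_zero_of_zpow_mul_eq_ringEquivOfRingEquiv (ψ : R ≃+* R) {ϖ : R} (hϖ : Irreducible ϖ)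
    {n : ℤ} (hn : n ≠ 0) {a : K}
    (h : algebraMap R K ϖ ^ n * a = IsFractionRing.ringEquivOfRingEquiv ψ a) : a = 0 := by
  by_contra ha
  obtain ⟨m, rfl | rfl⟩ := Int.eq_nat_or_neg n
  · have hval := addVal_eq_of_mul_eq_mul_ringEquivOfRingEquiv ψ ha (b := ϖ ^ m) (c := 1)
      (by rwa [map_one, one_mul, map_pow, ← zpow_natCast])
    rw [hϖ.addVal_pow, addVal_one] at hval
    exact hn (by exact_mod_cast hval)
  · have hϖ0 : algebraMap R K ϖ ≠ 0 :=
      (map_ne_zero_iff _ (IsFractionRing.injective R K)).2 hϖ.ne_zero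
    have hval := addVal_eq_of_mul_eq_mul_ringEquivOfRingEquiv ψ ha (b := 1) (c := ϖ ^ m)
      (by rw [← h, zpow_neg, zpow_natCast, map_one, map_pow]; field_simp)
    rw [hϖ.addVal_pow, addVal_one] at hval
    exact hn (by simp [show m = 0 by exact_mod_cast hval.symm])

end IsDiscreteValuationRing

theorem fracWittFrobenius_zpow (p : ℕ) [Fact p.Prime] (k : Type*) [Field k] [CharP k p]
    [PerfectRing k p] (e : ℤ) :
    fracWittFrobenius p k ^ e =
      IsFractionRing.ringEquivOfRingEquiv (WittVector.frobeniusEquiv p k ^ e) :=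
  (map_zpow (IsFractionRing.ringEquivOfRingEquivHom _ _) _ e).symm

theorem stmt3_general (p : ℕ) [Fact p.Prime] (k : Type*) [Field k] [CharP k p] [PerfectRing k p]
    (r r' : ℕ) (s s' : ℤ) (hr : 1 ≤ r) (hr' : 1 ≤ r')
    (hne : (s : ℚ) / (r : ℚ) ≠ (s' : ℚ) / (r' : ℚ))
    (a : FractionRing (WittVector p k))
    (ha : (p : FractionRing (WittVector p k)) ^ (s * (r' : ℤ)) * a =
      (fracWittFrobenius p k ^ ((r : ℤ) * (r' : ℤ))) a *
        (p : FractionRing (WittVector p k)) ^ ((r : ℤ) * s')) :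
    a = 0 := by
  have hslopes : s * r' - r * s' ≠ 0 := by
    contrapose! hne
    rw [div_eq_div_iff (Nat.cast_ne_zero.2 (by omega)) (Nat.cast_ne_zero.2 (by omega))]
    exact_mod_cast (sub_eq_zero.1 hne).trans (mul_comm _ _)
  have hp : algebraMap (WittVector p k) _ p = (p : FractionRing (WittVector p k)) :=
    map_natCast _ _
  have hp0 : (p : FractionRing (WittVector p k)) ≠ 0 := by
    rw [← hp]
    exact (map_ne_zero_iff _ (IsFractionRing.injective _ _)).2
      (WittVector.irreducible p (k := k)).ne_zero
  refine IsDiscreteValuationRing.eq_zero_of_zpow_mul_eq_ringEquivOfRingEquiv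
    (WittVector.frobeniusEquiv p k ^ ((r : ℤ) * r')) (WittVector.irreducible p (k := k))
    hslopes ?_
  rw [← fracWittFrobenius_zpow, hp, zpow_sub₀ hp0, div_mul_eq_mul_div, ha,
    mul_div_cancel_right₀ _ (zpow_ne_zero _ hp0)]

/-- let `λ = s/r ≠ λ' = s'/r'` be distinct rationals in lowest terms
(`r, r' ≥ 1`), `k` a perfect field of characteristic `p`, `L = Frac(W(k))` with
Frobenius `σ`.  If `a ∈ L` satisfies `p^{sr'} · a = σ^{rr'}(a) · p^{rs'}`, then `a = 0`. -/
theorem stmt3 (p : ℕ) [Fact p.Prime] (k : Type*) [Field k] [CharP k p] [PerfectRing k p]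
    (r r' : ℕ) (s s' : ℤ) (hr : 1 ≤ r) (hr' : 1 ≤ r')
    (hrs : IsCoprime (r : ℤ) s) (hrs' : IsCoprime (r' : ℤ) s')
    (hne : (s : ℚ) / (r : ℚ) ≠ (s' : ℚ) / (r' : ℚ))
    (a : FractionRing (WittVector p k))
    (ha : (p : FractionRing (WittVector p k)) ^ (s * (r' : ℤ)) * a =
      (fracWittFrobenius p k ^ ((r : ℤ) * (r' : ℤ))) a *
        (p : FractionRing (WittVector p k)) ^ ((r : ℤ) * s')) :
    a = 0 :=
  stmt3_general p k r r' s s' hr hr' hne a ha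
end

section
/- Let k be an algebraically closed field of characteristic p, W = W(k), and let M be a free W-module of rank 2 with a σ-linear endomorphism F and σ^{−1}-linear endomorphism V satisfying FV = VF = p, dim_k M/FM = dim_k M/VM = 1. If F(M/pM) ≠ V(M/pM) (as subspaces of M/pM), then M has a W-basis e₁, e₂ with F e₁ = e₁, V e₁ = p e₁, F e₂ = p e₂, V e₂ = e₂. -/
/-!
Since `FV = VF = p` and `M` is `p`-torsion free, `F z ∈ pM` holds exactly when `z ∈ VM`, and
symmetrically; moreover `pM ⊆ FM ∩ VM`, and `FM`, `VM` are distinct maximal submodules because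
`M/FM` and `M/VM` are simple. For `x ∈ FM \ VM` and `y ∈ VM \ FM` this gives `FM = Wx + pM` and
`VM = Wy + pM`, so by Nakayama `(x, y)` is a basis in which, modulo `p`, `F x ≡ a x`, `F y ≡ 0`,
`V y ≡ a' y`, `V x ≡ 0` with units `a, a'`. The slope of an `F`-stable line through `x` is the
fixed point of a `p`-adic contraction, which gives `F v = λ v` with `v ≡ x`; solving
`σ(μ) λ = μ` with a Frobenius rotation (this is where `k` algebraically closed is used) rescales
`v` into an `F`-fixed `e₀`, and likewise for `V`. Since `e₀ ≡ x` and `e₁ ≡ y` up to units,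
Nakayama again makes `(e₀, e₁)` a basis.
-/

open Submodule

theorem mem_span_singleton_smul_top_iff {R M : Type*} [CommRing R] [AddCommGroup M] [Module R M]
    {r : R} {m : M} : m ∈ Ideal.span {r} • (⊤ : Submodule R M) ↔ ∃ n, r • n = m := by
  simp [ideal_span_singleton_smul, mem_smul_pointwise_iff_exists]

theorem smul_mem_span_singleton_smul_top {R M : Type*} [CommRing R] [AddCommGroup M]
    [Module R M] {r c : R} (h : r ∣ c) (m : M) : c • m ∈ Ideal.span {r} • (⊤ : Submodule R M) :=
  smul_mem_smul (Ideal.mem_span_singleton.2 h) mem_top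

theorem smodEq_span_singleton_pow_iff_dvd {R : Type*} [CommRing R] (r x y : R) (n : ℕ) :
    x ≡ y [SMOD (Ideal.span {r} ^ n • ⊤ : Submodule R R)] ↔ r ^ n ∣ x - y := by
  rw [SModEq.sub_mem, smul_eq_mul, Ideal.mul_top, Ideal.span_singleton_pow,
    Ideal.mem_span_singleton]

theorem span_pair_sup_le_span_pair_sup {R M : Type*} [CommRing R] [AddCommGroup M] [Module R M]
    {N : Submodule R M} {x y e₀ e₁ : M} (hx : x ∈ span R {e₀} ⊔ N) (hy : y ∈ span R {e₁} ⊔ N) :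
    span R {x, y} ⊔ N ≤ span R {e₀, e₁} ⊔ N := by
  refine sup_le (span_le.2 (Set.insert_subset_iff.2 ⟨?_, Set.singleton_subset_iff.2 ?_⟩))
    le_sup_right
  · exact sup_le_sup_right (span_mono (by simp)) N hx
  · exact sup_le_sup_right (span_mono (by simp)) N hy

theorem IsAdicComplete.exists_fixedPoint {R M : Type*} [CommRing R] [AddCommGroup M]
    [Module R M] {I : Ideal R} [IsAdicComplete I M] (Ψ : M → M)
    (hΨ : ∀ n x y, x ≡ y [SMOD (I ^ n • ⊤ : Submodule R M)] →
      Ψ x ≡ Ψ y [SMOD (I ^ (n + 1) • ⊤ : Submodule R M)]) :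
    ∃ x, Ψ x = x := by
  set u : ℕ → M := fun n => Ψ^[n] 0
  have hstep (n : ℕ) : u n ≡ u (n + 1) [SMOD (I ^ n • ⊤ : Submodule R M)] := by
    induction n with
    | zero => simp [SModEq.sub_mem]
    | succ n ih => simpa only [u, Function.iterate_succ_apply'] using hΨ n _ _ ih
  have hmono {m n : ℕ} (h : m ≤ n) : (I ^ n • ⊤ : Submodule R M) ≤ I ^ m • ⊤ :=
    smul_mono_left (Ideal.pow_le_pow_right h)
  have hcauchy {m n : ℕ} (hmn : m ≤ n) : u m ≡ u n [SMOD (I ^ m • ⊤ : Submodule R M)] := by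
    induction n, hmn using Nat.le_induction with
    | base => rfl
    | succ n hmn ih => exact ih.trans ((hstep n).mono (hmono hmn))
  obtain ⟨L, hL⟩ := IsPrecomplete.prec IsAdicComplete.toIsPrecomplete hcauchy
  refine ⟨L, IsHausdorff.eq_iff_smodEq (I := I) |>.2 fun n => ?_⟩
  have h : Ψ L ≡ u (n + 1) [SMOD (I ^ (n + 1) • ⊤ : Submodule R M)] := by
    simpa only [u, Function.iterate_succ_apply'] using hΨ n _ _ (hL n).symm
  exact (h.trans (hL (n + 1))).mono (hmono n.le_succ)

namespace DieudonneModule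

variable {R : Type*} [CommRing R] {p : ℕ}

local notation "pR" => Ideal.span {((p : ℕ) : R)}

section LocalRing

variable [IsLocalRing R]

theorem isUnit_or_dvd (hR : IsLocalRing.maximalIdeal R = pR) (x : R) :
    IsUnit x ∨ (p : R) ∣ x := by
  rw [← Ideal.mem_span_singleton, ← hR, IsLocalRing.mem_maximalIdeal, mem_nonunits_iff]
  exact em _

theorem isUnit_add_of_dvd (hR : IsLocalRing.maximalIdeal R = pR) {x y : R} (hx : IsUnit x)
    (hy : (p : R) ∣ y) : IsUnit (x + y) := by
  refine (isUnit_or_dvd hR _).resolve_right fun h => ?_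
  have hp : (p : R) ∈ IsLocalRing.maximalIdeal R := hR ▸ Ideal.mem_span_singleton_self _
  exact hp (isUnit_of_dvd_unit (by simpa using dvd_sub h hy) hx)

-- `u` is a fixed point of `u ↦ (b + τ u * d) / (a + τ u * c)`, a `p`-adic contraction.
theorem exists_dvd_and_add_mul_eq_mul [IsAdicComplete pR R]
    (hR : IsLocalRing.maximalIdeal R = pR) (τ : R →+* R) {a b c d : R} (ha : IsUnit a)
    (hb : (p : R) ∣ b) (hc : (p : R) ∣ c) (hd : (p : R) ∣ d) :
    ∃ u, (p : R) ∣ u ∧ b + τ u * d = (a + τ u * c) * u := by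
  have hunit (u : R) : IsUnit (a + τ u * c) := isUnit_add_of_dvd hR ha (hc.mul_left _)
  set Ψ : R → R := fun u => (b + τ u * d) * Ring.inverse (a + τ u * c)
  have hΨp (u : R) : (p : R) ∣ Ψ u := (dvd_add hb (hd.mul_left _)).mul_right _
  have hΨ (n : ℕ) (u v : R) (huv : (p : R) ^ n ∣ u - v) : (p : R) ^ (n + 1) ∣ Ψ u - Ψ v := by
    have hτ : (p : R) ^ n ∣ τ u - τ v := by
      simpa only [map_sub, map_pow, map_natCast] using map_dvd τ huv
    have key : Ψ u - Ψ v = (a * d - b * c) * (τ u - τ v) *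
        (Ring.inverse (a + τ u * c) * Ring.inverse (a + τ v * c)) := by
      linear_combination (b + τ v * d) * Ring.inverse (a + τ v * c) *
          Ring.mul_inverse_cancel _ (hunit u) -
        (b + τ u * d) * Ring.inverse (a + τ u * c) * Ring.mul_inverse_cancel _ (hunit v)
    rw [key, pow_succ']
    exact (mul_dvd_mul (dvd_sub (hd.mul_left a) (hc.mul_left b)) hτ).mul_right _
  obtain ⟨u, hu⟩ := IsAdicComplete.exists_fixedPoint (I := pR) Ψ
    (by simpa only [smodEq_span_singleton_pow_iff_dvd] using hΨ)
  refine ⟨u, hu ▸ hΨp u, ?_⟩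
  calc b + τ u * d = (a + τ u * c) * Ψ u := by
        rw [mul_left_comm, Ring.mul_inverse_cancel _ (hunit u), mul_one]
    _ = (a + τ u * c) * u := by rw [hu]

end LocalRing

variable {M : Type*} [AddCommGroup M] [Module R M]

local notation "pM" => Ideal.span {((p : ℕ) : R)} • (⊤ : Submodule R M)

section Semilinear

variable {τ τ' : R →+* R} {G : M →ₛₗ[τ] M} {H : M →ₛₗ[τ'] M}

theorem smul_top_le_range [RingHomSurjective τ] (hGH : ∀ x, G (H x) = (p : R) • x) :
    pM ≤ LinearMap.range G := by
  intro m hm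
  obtain ⟨n, rfl⟩ := mem_span_singleton_smul_top_iff.1 hm
  exact ⟨H n, hGH n⟩

theorem map_mem_smul_top_of_mem_range [RingHomSurjective τ'] (hGH : ∀ x, G (H x) = (p : R) • x)
    {z : M} (hz : z ∈ LinearMap.range H) : G z ∈ pM := by
  obtain ⟨w, rfl⟩ := hz
  exact mem_span_singleton_smul_top_iff.2 ⟨w, (hGH w).symm⟩

theorem map_mem_smul_top_iff [RingHomSurjective τ'] (hpM : IsSMulRegular M (p : R))
    (hGH : ∀ x, G (H x) = (p : R) • x) (hHG : ∀ x, H (G x) = (p : R) • x) {z : M} :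
    G z ∈ pM ↔ z ∈ LinearMap.range H := by
  refine ⟨fun hz => ?_, map_mem_smul_top_of_mem_range hGH⟩
  obtain ⟨n, hn⟩ := mem_span_singleton_smul_top_iff.1 hz
  refine ⟨n, hpM ?_⟩
  calc (p : R) • H n = τ' p • H n := by rw [map_natCast]
    _ = H ((p : R) • n) := (LinearMap.map_smulₛₗ H _ _).symm
    _ = (p : R) • z := by rw [hn, hHG]

theorem range_le_span_singleton_map_sup [RingHomSurjective τ] [RingHomSurjective τ']
    (hGH : ∀ x, G (H x) = (p : R) • x) (hH : IsCoatom (LinearMap.range H)) {x : M}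
    (hx : x ∉ LinearMap.range H) : LinearMap.range G ≤ span R {G x} ⊔ pM := by
  rintro _ ⟨w, rfl⟩
  have htop : span R {x} ⊔ LinearMap.range H = ⊤ :=
    hH.2 _ (right_lt_sup.2 fun h => hx (h (mem_span_singleton_self x)))
  obtain ⟨_, hcx, h, hh, rfl⟩ := mem_sup.1 (htop ▸ mem_top : w ∈ span R {x} ⊔ LinearMap.range H)
  obtain ⟨c, rfl⟩ := mem_span_singleton.1 hcx
  rw [map_add, LinearMap.map_smulₛₗ]
  exact add_mem (mem_sup_left (smul_mem _ _ (mem_span_singleton_self _)))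
    (mem_sup_right (map_mem_smul_top_of_mem_range hGH hh))

end Semilinear

variable [IsLocalRing R]

theorem isCoatom_of_quotient_equiv (hR : IsLocalRing.maximalIdeal R = pR) {N : Submodule R M}
    (e : (M ⧸ N) ≃ₗ[R] (R ⧸ pR)) : IsCoatom N := by
  have : IsSimpleModule R (R ⧸ pR) :=
    isSimpleModule_iff_isCoatom.2 (Ideal.isMaximal_def.1 (hR ▸ IsLocalRing.maximalIdeal.isMaximal R))
  exact isSimpleModule_iff_isCoatom.1 (IsSimpleModule.congr e)

theorem top_le_of_top_le_sup_smul_top [Module.Finite R M] (hR : IsLocalRing.maximalIdeal R = pR)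
    {N : Submodule R M} (h : ⊤ ≤ N ⊔ pM) : ⊤ ≤ N := by
  refine le_of_le_smul_of_le_jacobson_bot Module.Finite.fg_top ?_ h
  rw [IsLocalRing.jacobson_eq_maximalIdeal ⊥ bot_ne_top, hR]

theorem exists_basis_of_top_le_span_sup [Module.Free R M] [Module.Finite R M]
    (hR : IsLocalRing.maximalIdeal R = pR) (hrank : Module.finrank R M = 2) {x y : M}
    (h : ⊤ ≤ span R {x, y} ⊔ pM) : ∃ b : Module.Basis (Fin 2) R M, b 0 = x ∧ b 1 = y := by
  have hspan : ⊤ ≤ span R (Set.range ![x, y]) := by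
    rw [Matrix.range_cons, Matrix.range_cons, Matrix.range_empty, Set.union_empty,
      Set.singleton_union]
    exact top_le_of_top_le_sup_smul_top hR h
  exact ⟨basisOfTopLeSpanOfCardEqFinrank ![x, y] hspan (by simp [hrank]), by simp, by simp⟩

theorem exists_isUnit_map_eq_smul [IsAdicComplete pR R] (hR : IsLocalRing.maximalIdeal R = pR)
    {τ : R →+* R} (G : M →ₛₗ[τ] M) (b : Module.Basis (Fin 2) R M) {a : R} (ha : IsUnit a)
    (hG₀ : G (b 0) - a • b 0 ∈ pM) (hG₁ : G (b 1) ∈ pM) :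
    ∃ (v : M) (c : R), IsUnit c ∧ G v = c • v ∧ v - b 0 ∈ pM := by
  set A : Fin 2 → Fin 2 → R := fun i j => b.repr (G (b j)) i
  have hGb (j : Fin 2) : G (b j) = A 0 j • b 0 + A 1 j • b 1 := by
    rw [← Fin.sum_univ_two (fun i => A i j • b i)]
    exact (b.sum_repr (G (b j))).symm
  have hdvd (i : Fin 2) {m : M} (hm : m ∈ pM) : (p : R) ∣ b.repr m i := by
    obtain ⟨n, rfl⟩ := mem_span_singleton_smul_top_iff.1 hm
    simp
  have h₀₀ : IsUnit (A 0 0) := by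
    have := isUnit_add_of_dvd hR ha (by simpa using hdvd 0 hG₀)
    rwa [add_sub_cancel] at this
  obtain ⟨u, hu, hfix⟩ := exists_dvd_and_add_mul_eq_mul hR τ h₀₀
    (by simpa using hdvd 1 hG₀) (hdvd 0 hG₁) (hdvd 1 hG₁)
  refine ⟨b 0 + u • b 1, A 0 0 + τ u * A 0 1,
    isUnit_add_of_dvd hR h₀₀ ((hdvd 0 hG₁).mul_left _), ?_, ?_⟩
  · rw [map_add, LinearMap.map_smulₛₗ, hGb 0, hGb 1]
    linear_combination (norm := module) hfix • b 1
  · simpa using smul_mem_span_singleton_smul_top hu (b 1)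

theorem exists_map_eq_self [IsAdicComplete pR R] (hR : IsLocalRing.maximalIdeal R = pR)
    {τ : R →+* R} (G : M →ₛₗ[τ] M) (hτ : ∀ c, IsUnit c → ∃ μ, IsUnit μ ∧ τ μ * c = μ)
    (b : Module.Basis (Fin 2) R M) {a : R} (ha : IsUnit a) (hG₀ : G (b 0) - a • b 0 ∈ pM)
    (hG₁ : G (b 1) ∈ pM) : ∃ e, G e = e ∧ b 0 ∈ span R {e} ⊔ pM := by
  obtain ⟨v, c, hc, hv, hvb⟩ := exists_isUnit_map_eq_smul hR G b ha hG₀ hG₁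
  obtain ⟨_, ⟨μ, rfl⟩, hμ⟩ := hτ c hc
  refine ⟨(μ : R) • v, by rw [LinearMap.map_smulₛₗ, hv, smul_smul, hμ], ?_⟩
  have hb : b 0 = (↑μ⁻¹ : R) • (μ : R) • v - (v - b 0) := by
    rw [smul_smul, Units.inv_mul, one_smul, sub_sub_cancel]
  rw [hb]
  exact sub_mem (mem_sup_left (smul_mem _ _ (mem_span_singleton_self _))) (mem_sup_right hvb)

section LocalSemilinear

variable {τ τ' : R →+* R} [RingHomSurjective τ] [RingHomSurjective τ'] {G : M →ₛₗ[τ] M}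
  {H : M →ₛₗ[τ'] M}

theorem range_eq_span_singleton_sup (hR : IsLocalRing.maximalIdeal R = pR)
    (hGH : ∀ x, G (H x) = (p : R) • x) (hHG : ∀ x, H (G x) = (p : R) • x)
    (hH : IsCoatom (LinearMap.range H)) {x : M} (hxG : x ∈ LinearMap.range G)
    (hxH : x ∉ LinearMap.range H) : LinearMap.range G = span R {x} ⊔ pM := by
  have hle := range_le_span_singleton_map_sup hGH hH hxH
  have hGx : G x ∈ span R {x} ⊔ pM := by
    obtain ⟨_, hcx, m, hm, hx⟩ := mem_sup.1 (hle hxG)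
    obtain ⟨c, rfl⟩ := mem_span_singleton.1 hcx
    rcases isUnit_or_dvd hR c with ⟨c, rfl⟩ | hc
    · have : G x = (↑c⁻¹ : R) • (x - m) := by
        conv_rhs => rw [← hx]
        rw [add_sub_cancel_right, smul_smul, Units.inv_mul, one_smul]
      rw [this]
      exact smul_mem _ _ (sub_mem (mem_sup_left (mem_span_singleton_self x)) (mem_sup_right hm))
    · exact absurd (smul_top_le_range hHG
        (hx ▸ add_mem (smul_mem_span_singleton_smul_top hc _) hm)) hxH
  refine le_antisymm (hle.trans (sup_le ?_ le_sup_right)) (sup_le ?_ (smul_top_le_range hGH))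
  · exact span_le.2 (Set.singleton_subset_iff.2 hGx)
  · exact span_le.2 (Set.singleton_subset_iff.2 hxG)

theorem exists_isUnit_map_sub_smul_mem (hR : IsLocalRing.maximalIdeal R = pR)
    (hpM : IsSMulRegular M (p : R)) (hGH : ∀ x, G (H x) = (p : R) • x)
    (hHG : ∀ x, H (G x) = (p : R) • x) (hH : IsCoatom (LinearMap.range H)) {x : M}
    (hxG : x ∈ LinearMap.range G) (hxH : x ∉ LinearMap.range H) :
    ∃ a : R, IsUnit a ∧ G x - a • x ∈ pM := by
  have hGx : G x ∈ span R {x} ⊔ pM :=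
    range_eq_span_singleton_sup hR hGH hHG hH hxG hxH ▸ LinearMap.mem_range_self G x
  obtain ⟨_, hax, m, hm, hGx⟩ := mem_sup.1 hGx
  obtain ⟨a, rfl⟩ := mem_span_singleton.1 hax
  refine ⟨a, (isUnit_or_dvd hR a).resolve_right fun ha => hxH ?_, ?_⟩
  · exact (map_mem_smul_top_iff hpM hGH hHG).1
      (hGx ▸ add_mem (smul_mem_span_singleton_smul_top ha x) hm)
  · rwa [← hGx, add_sub_cancel_left]

theorem exists_top_le_span_pair_sup (hR : IsLocalRing.maximalIdeal R = pR)
    (hGH : ∀ x, G (H x) = (p : R) • x) (hHG : ∀ x, H (G x) = (p : R) • x)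
    (hG : IsCoatom (LinearMap.range G)) (hH : IsCoatom (LinearMap.range H))
    (hne : LinearMap.range G ≠ LinearMap.range H) :
    ∃ x y : M, x ∈ LinearMap.range G ∧ x ∉ LinearMap.range H ∧ y ∈ LinearMap.range H ∧
      y ∉ LinearMap.range G ∧ ⊤ ≤ span R {x, y} ⊔ pM := by
  obtain ⟨x, hxG, hxH⟩ := SetLike.not_le_iff_exists.1 fun h =>
    hne ((hG.le_iff.1 h).resolve_left hH.1).symm
  obtain ⟨y, hyH, hyG⟩ := SetLike.not_le_iff_exists.1 fun h =>
    hne ((hH.le_iff.1 h).resolve_left hG.1)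
  refine ⟨x, y, hxG, hxH, hyH, hyG, ?_⟩
  rw [span_insert, sup_sup_distrib_right, ← range_eq_span_singleton_sup hR hGH hHG hH hxG hxH,
    ← range_eq_span_singleton_sup hR hHG hGH hG hyH hyG, hG.sup_eq_top_of_ne hH hne]

theorem exists_map_eq_self_of_mem_range [IsAdicComplete pR R]
    (hR : IsLocalRing.maximalIdeal R = pR) (hpM : IsSMulRegular M (p : R))
    (hGH : ∀ x, G (H x) = (p : R) • x) (hHG : ∀ x, H (G x) = (p : R) • x)
    (hH : IsCoatom (LinearMap.range H)) (hτ : ∀ c, IsUnit c → ∃ μ, IsUnit μ ∧ τ μ * c = μ)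
    (b : Module.Basis (Fin 2) R M) (hb₀G : b 0 ∈ LinearMap.range G)
    (hb₀H : b 0 ∉ LinearMap.range H) (hb₁ : b 1 ∈ LinearMap.range H) :
    ∃ e, G e = e ∧ b 0 ∈ span R {e} ⊔ pM := by
  obtain ⟨a, ha, hGb⟩ := exists_isUnit_map_sub_smul_mem hR hpM hGH hHG hH hb₀G hb₀H
  exact exists_map_eq_self hR G hτ b ha hGb (map_mem_smul_top_of_mem_range hGH hb₁)

end LocalSemilinear

end DieudonneModule

namespace WittVector

variable {p : ℕ} [Fact p.Prime] {k : Type*} [Field k] [IsAlgClosed k] [CharP k p]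

theorem exists_isUnit_frobenius_mul_eq {a₁ a₂ : WittVector p k} (ha₁ : IsUnit a₁)
    (ha₂ : IsUnit a₂) : ∃ μ, IsUnit μ ∧ frobenius μ * a₁ = μ * a₂ := by
  have h₁ : a₁.coeff 0 ≠ 0 := (ha₁.map constantCoeff).ne_zero
  have h₂ : a₂.coeff 0 ≠ 0 := (ha₂.map constantCoeff).ne_zero
  refine ⟨frobeniusRotation p h₁ h₂, isUnit_of_coeff_zero_ne_zero _ ?_,
    frobenius_frobeniusRotation p h₁ h₂⟩
  simpa [frobeniusRotation, frobeniusRotationCoeff] using RecursionBase.solution_nonzero p h₁ h₂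

theorem exists_isUnit_frobeniusEquiv_mul_eq {c : WittVector p k} (hc : IsUnit c) :
    ∃ μ, IsUnit μ ∧ frobeniusEquiv p k μ * c = μ := by
  obtain ⟨μ, hμ, h⟩ := exists_isUnit_frobenius_mul_eq hc isUnit_one
  exact ⟨μ, hμ, by rw [frobeniusEquiv_apply, h, mul_one]⟩

theorem exists_isUnit_frobeniusEquiv_symm_mul_eq {c : WittVector p k} (hc : IsUnit c) :
    ∃ μ, IsUnit μ ∧ (frobeniusEquiv p k).symm μ * c = μ := by
  obtain ⟨β, hβ, h⟩ := exists_isUnit_frobenius_mul_eq isUnit_one hc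
  refine ⟨frobeniusEquiv p k β, hβ.map _, ?_⟩
  rw [RingEquiv.symm_apply_apply, frobeniusEquiv_apply, ← h, mul_one]

end WittVector

open DieudonneModule in
/-- ordinary case of the rank-2 classification: let `k` be algebraically
closed of characteristic `p`, `W = W(k)` with Frobenius `σ`, and `M` a free `W`-module of
rank `2` with a `σ`-linear `F` and a `σ⁻¹`-linear `V` satisfying `FV = VF = p` and
`dim_k M/FM = dim_k M/VM = 1` (encoded as `M/FM ≅ M/VM ≅ W/pW`).  If
`F(M/pM) ≠ V(M/pM)`, then `M` has a `W`-basis `e₀, e₁` with `Fe₀ = e₀`, `Ve₀ = pe₀`,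
`Fe₁ = pe₁`, `Ve₁ = e₁`. -/
theorem stmt11 (p : ℕ) [Fact p.Prime] (k : Type*) [Field k] [IsAlgClosed k] [CharP k p]
    (M : Type*) [AddCommGroup M] [Module (WittVector p k) M]
    [Module.Free (WittVector p k) M] [Module.Finite (WittVector p k) M]
    (hrank : Module.finrank (WittVector p k) M = 2)
    (F V : M → M)
    (hFadd : ∀ x y, F (x + y) = F x + F y)
    (hFsmul : ∀ (a : WittVector p k) (x : M),
      F (a • x) = (WittVector.frobeniusEquiv p k a) • F x)
    (hVadd : ∀ x y, V (x + y) = V x + V y)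
    (hVsmul : ∀ (a : WittVector p k) (x : M),
      V (a • x) = ((WittVector.frobeniusEquiv p k).symm a) • V x)
    (hFV : ∀ x, F (V x) = (p : WittVector p k) • x)
    (hVF : ∀ x, V (F x) = (p : WittVector p k) • x)
    (hdimF : Nonempty ((M ⧸ Submodule.span (WittVector p k) (Set.range F)) ≃ₗ[WittVector p k]
      (WittVector p k ⧸ (Ideal.span {(p : WittVector p k)}))))
    (hdimV : Nonempty ((M ⧸ Submodule.span (WittVector p k) (Set.range V)) ≃ₗ[WittVector p k]
      (WittVector p k ⧸ (Ideal.span {(p : WittVector p k)}))))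
    (hord : Submodule.span (WittVector p k) (Set.range F)
        ⊔ (Ideal.span {(p : WittVector p k)} • (⊤ : Submodule (WittVector p k) M))
      ≠ Submodule.span (WittVector p k) (Set.range V)
        ⊔ (Ideal.span {(p : WittVector p k)} • (⊤ : Submodule (WittVector p k) M))) :
    ∃ bas : Module.Basis (Fin 2) (WittVector p k) M,
      F (bas 0) = bas 0 ∧ V (bas 0) = (p : WittVector p k) • bas 0 ∧
      F (bas 1) = (p : WittVector p k) • bas 1 ∧ V (bas 1) = bas 1 := by
  let σ : WittVector p k ≃+* WittVector p k := WittVector.frobeniusEquiv p k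
  let Fₗ : M →ₛₗ[(σ : WittVector p k →+* WittVector p k)] M := ⟨⟨F, hFadd⟩, hFsmul⟩
  let Vₗ : M →ₛₗ[(σ.symm : WittVector p k →+* WittVector p k)] M := ⟨⟨V, hVadd⟩, hVsmul⟩
  have hFVₗ : ∀ x, Fₗ (Vₗ x) = (p : WittVector p k) • x := hFV
  have hVFₗ : ∀ x, Vₗ (Fₗ x) = (p : WittVector p k) • x := hVF
  have hR := (WittVector.irreducible p (k := k)).maximalIdeal_eq
  have hpM : IsSMulRegular M (p : WittVector p k) :=
    .of_ne_zero (WittVector.irreducible p).ne_zero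
  have hFM : Submodule.span _ (Set.range F) = LinearMap.range Fₗ := span_eq (LinearMap.range Fₗ)
  have hVM : Submodule.span _ (Set.range V) = LinearMap.range Vₗ := span_eq (LinearMap.range Vₗ)
  rw [hFM, hVM, sup_eq_left.2 (smul_top_le_range hFVₗ),
    sup_eq_left.2 (smul_top_le_range hVFₗ)] at hord
  have hF : IsCoatom (LinearMap.range Fₗ) := isCoatom_of_quotient_equiv hR (hFM ▸ hdimF.some)
  have hV : IsCoatom (LinearMap.range Vₗ) := isCoatom_of_quotient_equiv hR (hVM ▸ hdimV.some)
  obtain ⟨x, y, hxF, hxV, hyV, hyF, hxy⟩ := exists_top_le_span_pair_sup hR hFVₗ hVFₗ hF hV hord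
  obtain ⟨b, rfl, rfl⟩ := exists_basis_of_top_le_span_sup hR hrank hxy
  obtain ⟨b', hb'₀, hb'₁⟩ :=
    exists_basis_of_top_le_span_sup hR hrank (Set.pair_comm (b 0) (b 1) ▸ hxy)
  obtain ⟨e₀, he₀, hx⟩ := exists_map_eq_self_of_mem_range hR hpM hFVₗ hVFₗ hV
    (fun _ => WittVector.exists_isUnit_frobeniusEquiv_mul_eq) b hxF hxV hyV
  obtain ⟨e₁, he₁, hy⟩ := exists_map_eq_self_of_mem_range hR hpM hVFₗ hFVₗ hF
    (fun _ => WittVector.exists_isUnit_frobeniusEquiv_symm_mul_eq) b'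
    (hb'₀ ▸ hyV) (hb'₀ ▸ hyF) (hb'₁ ▸ hxF)
  obtain ⟨e, rfl, rfl⟩ := exists_basis_of_top_le_span_sup hR hrank
    (hxy.trans (span_pair_sup_le_span_pair_sup hx (hb'₀ ▸ hy)))
  exact ⟨e, he₀, (congrArg V he₀).symm.trans (hVF _), (congrArg F he₁).symm.trans (hFV _), he₁⟩
end

section
/- Let k be an algebraically closed field of characteristic p, W = W(k), and let M be a free W-module of rank 2 with F, V as in a Dieudonné module (FV = VF = p, F σ-linear, V σ^{−1}-linear, dim M/FM = dim M/VM = 1). If F(M/pM) = V(M/pM) then F²M = pM, and M is isomorphic to the Dieudonné module M₂ = W e₁ ⊕ W e₂ with F e₁ = V e₁ = e₂ and F e₂ = V e₂ = p e₁. -/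
/-!
As `p M ⊆ F M ∩ V M`, the hypothesis `F M + p M = V M + p M` says `F M = V M`, whence
`F² M = F V M = p M`. Hence `Ψ = V⁻¹ F` is a `σ²`-semilinear bijection of `M`, and it suffices to
find `e ∉ F M` with `Ψ e = e`, i.e. `F e = V e`: by Nakayama `(e, F e)` is then a basis, and
`F (F e) = F (V e) = p e`. For `x₀ ∉ F M` the pair `(x₀, F x₀)` is a basis in which `Ψ` is
triangular modulo `p`, with unit diagonal entries `a`, `σ a`. So modulo `p` the equations
`Ψ x - x = c` and `Ψ e = e` come down to `ā S ^ (p ^ 2) - S = c̄`, which is solvable because `k` is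
algebraically closed; a fixed point modulo `p` then lifts by successive approximation, `M` being
`p`-adically complete.
-/

open Submodule

section Adic

variable {R M : Type*} [CommRing R] [AddCommGroup M] [Module R M]

lemma mem_ideal_span_singleton_smul_top {r : R} {x : M} :
    x ∈ Ideal.span {r} • (⊤ : Submodule R M) ↔ ∃ z, r • z = x := by
  simp [ideal_span_singleton_smul, mem_smul_pointwise_iff_exists]

lemma mem_ideal_span_singleton_pow_smul_top {r : R} {n : ℕ} {x : M} :
    x ∈ Ideal.span {r} ^ n • (⊤ : Submodule R M) ↔ ∃ z, r ^ n • z = x := by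
  rw [Ideal.span_singleton_pow, mem_ideal_span_singleton_smul_top]

lemma Module.Basis.mem_ideal_smul_top_iff {ι : Type*} [Fintype ι] (b : Module.Basis ι R M)
    (J : Ideal R) {x : M} : x ∈ J • (⊤ : Submodule R M) ↔ ∀ i, b.repr x i ∈ J := by
  refine ⟨fun hx i => ?_, fun hx => ?_⟩
  · refine smul_induction_on hx (fun r hr m _ => ?_) (fun x y hx hy => ?_)
    · simpa using J.mul_mem_right _ hr
    · simpa using J.add_mem hx hy
  · rw [← b.sum_repr x]
    exact sum_mem fun i _ => smul_mem_smul (hx i) trivial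

lemma Module.Basis.smodEq_iff {ι : Type*} [Fintype ι] (b : Module.Basis ι R M) (J : Ideal R)
    {x y : M} : x ≡ y [SMOD J • (⊤ : Submodule R M)] ↔
      ∀ i, b.repr x i ≡ b.repr y i [SMOD J • (⊤ : Submodule R R)] := by
  simp only [SModEq.sub_mem, b.mem_ideal_smul_top_iff, map_sub, Finsupp.coe_sub, Pi.sub_apply,
    smul_eq_mul, Ideal.mul_top]

theorem Module.Basis.isAdicComplete {ι : Type*} [Finite ι] (b : Module.Basis ι R M)
    (I : Ideal R) [IsAdicComplete I R] : IsAdicComplete I M := by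
  have := Fintype.ofFinite ι
  refine @IsAdicComplete.mk _ _ _ _ _ _ ⟨fun x hx => b.ext_elem fun i => ?_⟩
    ⟨fun f hf => ?_⟩
  · have hi : ∀ n, b.repr x i ≡ 0 [SMOD (I ^ n • ⊤ : Submodule R R)] := fun n => by
      have := (b.smodEq_iff (I ^ n)).mp (hx n) i
      rwa [map_zero, Finsupp.zero_apply] at this
    rw [IsHausdorff.haus' _ hi, map_zero, Finsupp.zero_apply]
  · choose L hL using fun i => IsPrecomplete.prec' (I := I) (fun n => b.repr (f n) i)
      fun hmn => (b.smodEq_iff _).mp (hf hmn) i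
    refine ⟨b.equivFun.symm L, fun n => (b.smodEq_iff _).mpr fun i => ?_⟩
    rw [show b.repr (b.equivFun.symm L) i = L i from congrFun (b.equivFun.apply_symm_apply L) i]
    exact hL i n

lemma AddMonoidHom.map_pow_smul_of_map_smul {π : R} (Ψ : M →+ M)
    (hΨ : ∀ m, Ψ (π • m) = π • Ψ m) (n : ℕ) (m : M) : Ψ (π ^ n • m) = π ^ n • Ψ m := by
  induction n with
  | zero => simp
  | succ n ih => rw [pow_succ', mul_smul, hΨ, ih, ← mul_smul, ← pow_succ']

lemma AddMonoidHom.map_smodEq_of_map_smul {π : R} (Ψ : M →+ M)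
    (hΨ : ∀ m, Ψ (π • m) = π • Ψ m) {n : ℕ} {x y : M}
    (h : x ≡ y [SMOD Ideal.span {π} ^ n • (⊤ : Submodule R M)]) :
    Ψ x ≡ Ψ y [SMOD Ideal.span {π} ^ n • (⊤ : Submodule R M)] := by
  rw [SModEq.sub_mem, mem_ideal_span_singleton_pow_smul_top] at h ⊢
  obtain ⟨z, hz⟩ := h
  exact ⟨Ψ z, by rw [← Ψ.map_pow_smul_of_map_smul hΨ, hz, map_sub]⟩

theorem exists_map_eq_self_smodEq_of_forall_exists_sub_smodEq {π : R}
    [IsAdicComplete (Ideal.span {π}) M] (Ψ : M →+ M) (hΨ : ∀ m, Ψ (π • m) = π • Ψ m)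
    (hsurj : ∀ c, ∃ x, Ψ x - x ≡ c [SMOD Ideal.span {π} • (⊤ : Submodule R M)])
    {e₀ : M} (he₀ : Ψ e₀ ≡ e₀ [SMOD Ideal.span {π} • (⊤ : Submodule R M)]) :
    ∃ e, Ψ e = e ∧ e ≡ e₀ [SMOD Ideal.span {π} • (⊤ : Submodule R M)] := by
  set I := Ideal.span {π}
  have step : ∀ n x, Ψ x ≡ x [SMOD I ^ (n + 1) • (⊤ : Submodule R M)] →
      ∃ y, Ψ y ≡ y [SMOD I ^ (n + 2) • (⊤ : Submodule R M)] ∧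
        x ≡ y [SMOD I ^ (n + 1) • (⊤ : Submodule R M)] := by
    intro n x hx
    rw [SModEq.sub_mem, mem_ideal_span_singleton_pow_smul_top] at hx
    obtain ⟨c, hc⟩ := hx
    obtain ⟨z, hz⟩ := hsurj (-c)
    rw [SModEq.sub_mem, mem_ideal_span_singleton_smul_top] at hz
    obtain ⟨d, hd⟩ := hz
    refine ⟨x + π ^ (n + 1) • z, ?_, ?_⟩
    · rw [SModEq.sub_mem, mem_ideal_span_singleton_pow_smul_top]
      refine ⟨d, ?_⟩
      rw [map_add, Ψ.map_pow_smul_of_map_smul hΨ]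
      linear_combination (norm := module) hc + π ^ (n + 1) • hd
    · rw [SModEq.sub_mem, mem_ideal_span_singleton_pow_smul_top]
      exact ⟨-z, by simp⟩
  choose! g hg using step
  let f : ℕ → M := fun n => Nat.rec e₀ (fun n x => g n x) n
  have hfix : ∀ n, Ψ (f n) ≡ f n [SMOD I ^ (n + 1) • (⊤ : Submodule R M)] := by
    intro n
    induction n with
    | zero => simpa [f] using he₀
    | succ n ih => exact (hg n _ ih).1
  have hcauchy : ∀ n, f n ≡ f (n + 1) [SMOD I ^ n • (⊤ : Submodule R M)] := fun n =>
    ((hg n _ (hfix n)).2).mono (smul_mono_left (Ideal.pow_le_pow_right n.le_succ))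
  obtain ⟨L, hL⟩ := IsPrecomplete.prec' f ((AdicCompletion.isAdicCauchy_iff I M f).mpr hcauchy)
  refine ⟨L, (IsHausdorff.eq_iff_smodEq (I := I)).mpr fun n => ?_, ?_⟩
  · calc Ψ L ≡ Ψ (f n) [SMOD I ^ n • (⊤ : Submodule R M)] :=
          Ψ.map_smodEq_of_map_smul hΨ (hL n).symm
      _ ≡ f n [SMOD I ^ n • (⊤ : Submodule R M)] :=
          (hfix n).mono (smul_mono_left (Ideal.pow_le_pow_right n.le_succ))
      _ ≡ L [SMOD I ^ n • (⊤ : Submodule R M)] := hL n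
  · have h1 := hg 0 e₀ (by simpa using he₀)
    have h2 := (hL 1).symm
    simp only [zero_add, pow_one] at h1 h2
    exact h2.trans h1.2.symm

end Adic

section Dieudonne

variable {R M : Type*} [CommRing R] [AddCommGroup M] [Module R M] {σ : R ≃+* R} {π : R}
  {F : M →ₛₗ[(σ : R →+* R)] M} {V : M →ₛₗ[(σ.symm : R →+* R)] M}

lemma isCoatom_of_quotient_linearEquiv {N : Submodule R M} {I : Ideal R} [I.IsMaximal]
    (e : (M ⧸ N) ≃ₗ[R] R ⧸ I) : IsCoatom N := by
  have : IsSimpleModule R (R ⧸ I) := isSimpleModule_iff_isCoatom.mpr (Ideal.isMaximal_def.mp ‹_›)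
  have : IsSimpleModule R (M ⧸ N) := IsSimpleModule.congr e
  exact isSimpleModule_iff_isCoatom.mp this

lemma ideal_span_singleton_smul_top_le_range {τ : R →+* R} [RingHomSurjective τ]
    (A : M →ₛₗ[τ] M) {B : M → M} (h : ∀ x, A (B x) = π • x) :
    Ideal.span {π} • (⊤ : Submodule R M) ≤ LinearMap.range A := by
  intro x hx
  obtain ⟨z, rfl⟩ := mem_ideal_span_singleton_smul_top.mp hx
  exact ⟨B z, h z⟩

lemma span_range_apply_apply_eq_of_range_eq (hFV : ∀ x, F (V x) = π • x)
    (hrange : LinearMap.range F = LinearMap.range V) :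
    span R (Set.range fun x => F (F x)) = Ideal.span {π} • (⊤ : Submodule R M) := by
  apply le_antisymm
  · rw [span_le]
    rintro _ ⟨x, rfl⟩
    obtain ⟨z, hz⟩ : F x ∈ LinearMap.range V := hrange ▸ LinearMap.mem_range_self F x
    exact mem_ideal_span_singleton_smul_top.mpr ⟨z, by rw [← hFV, hz]⟩
  · intro x hx
    obtain ⟨z, rfl⟩ := mem_ideal_span_singleton_smul_top.mp hx
    obtain ⟨w, hw⟩ : V z ∈ LinearMap.range F := hrange ▸ LinearMap.mem_range_self V z
    exact subset_span ⟨w, by simp only [hw, hFV]⟩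

lemma injective_of_apply_apply_eq_smul (hFV : ∀ x, F (V x) = π • x) (hπ : IsSMulRegular M π) :
    Function.Injective V :=
  fun x y h => hπ (by simpa only [hFV] using congrArg F h)

lemma exists_apply_eq_of_range_le (hFV : ∀ x, F (V x) = π • x) (hπ : IsSMulRegular M π)
    (h : LinearMap.range F ≤ LinearMap.range V) :
    ∃ Ψ : M →ₛₗ[((σ.trans σ : R ≃+* R) : R →+* R)] M, ∀ m, V (Ψ m) = F m := by
  have hV := injective_of_apply_apply_eq_smul hFV hπ
  choose Ψ hΨ using fun m => h (LinearMap.mem_range_self F m)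
  refine ⟨{ toFun := Ψ, map_add' := fun x y => hV ?_, map_smul' := fun a m => hV ?_ }, hΨ⟩
  · simp [hΨ]
  · simp [hΨ]

section Psi

variable {Ψ : M →ₛₗ[((σ.trans σ : R ≃+* R) : R →+* R)] M}

lemma apply_apply_comm_of_apply_eq (hFV : ∀ x, F (V x) = π • x)
    (hVF : ∀ x, V (F x) = π • x) (hπ : IsSMulRegular M π) (hΨ : ∀ m, V (Ψ m) = F m) (m : M) :
    Ψ (F m) = F (Ψ m) :=
  injective_of_apply_apply_eq_smul hFV hπ (by rw [hΨ, hVF, ← hFV, hΨ])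

lemma surjective_of_apply_eq (hFV : ∀ x, F (V x) = π • x) (hπ : IsSMulRegular M π)
    (h : LinearMap.range V ≤ LinearMap.range F) (hΨ : ∀ m, V (Ψ m) = F m) :
    Function.Surjective Ψ := fun m => by
  obtain ⟨w, hw⟩ := h (LinearMap.mem_range_self V m)
  exact ⟨w, injective_of_apply_apply_eq_smul hFV hπ (by rw [hΨ, hw])⟩

lemma apply_notMem_range_of_surjective {x₀ : M} (hspan : span R {x₀, F x₀} = ⊤)
    (hsurj : Function.Surjective Ψ) (hΨF : ∀ m, Ψ (F m) = F (Ψ m))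
    (hx₀ : x₀ ∉ LinearMap.range F) : Ψ x₀ ∉ LinearMap.range F := by
  intro h
  obtain ⟨w, hw⟩ := hsurj x₀
  obtain ⟨s, t, rfl⟩ := mem_span_pair.mp (hspan ▸ mem_top : w ∈ span R {x₀, F x₀})
  rw [map_add, map_smulₛₗ, map_smulₛₗ, hΨF] at hw
  exact hx₀ (hw ▸ add_mem (smul_mem _ _ h) (smul_mem _ _ (LinearMap.mem_range_self F _)))

end Psi

lemma span_pair_eq_top_of_notMem_range [IsLocalRing R] [Module.Finite R M]
    (hπ : π ∈ IsLocalRing.maximalIdeal R) (hcoatom : IsCoatom (LinearMap.range F))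
    (hFF : ∀ m, F (F m) ∈ Ideal.span {π} • (⊤ : Submodule R M)) {x : M}
    (hx : x ∉ LinearMap.range F) : span R {x, F x} = ⊤ := by
  have hsup : LinearMap.range F ⊔ span R {x} = ⊤ :=
    hcoatom.2 _ (lt_of_le_of_ne le_sup_left fun h =>
      hx (h ▸ mem_sup_right (mem_span_singleton_self x)))
  refine top_le_iff.mp (le_of_le_smul_of_le_jacobson_bot (I := Ideal.span {π})
    Module.Finite.fg_top ?_ ?_)
  · rw [IsLocalRing.jacobson_eq_maximalIdeal ⊥ bot_ne_top, Ideal.span_le,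
      Set.singleton_subset_iff]
    exact hπ
  · refine hsup.symm.le.trans (sup_le ?_ ?_)
    · rintro _ ⟨m, rfl⟩
      obtain ⟨_, ⟨w, rfl⟩, _, hv, rfl⟩ := mem_sup.mp (hsup ▸ mem_top : m ∈ _)
      obtain ⟨r, rfl⟩ := mem_span_singleton.mp hv
      rw [map_add, map_smulₛₗ]
      exact add_mem (mem_sup_right (hFF w))
        (mem_sup_left (smul_mem _ _ (subset_span (Set.mem_insert_of_mem _ rfl))))
    · rw [span_le, Set.singleton_subset_iff]
      exact mem_sup_left (subset_span (Set.mem_insert _ _))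

lemma exists_basis_of_apply_eq_apply (hFV : ∀ x, F (V x) = π • x)
    (hVF : ∀ x, V (F x) = π • x) (hrank : Module.finrank R M = 2) {e : M} (hFe : F e = V e)
    (hspan : span R {e, F e} = ⊤) :
    ∃ bas : Module.Basis (Fin 2) R M, F (bas 0) = bas 1 ∧ V (bas 0) = bas 1 ∧
      F (bas 1) = π • bas 0 ∧ V (bas 1) = π • bas 0 := by
  let bas := basisOfTopLeSpanOfCardEqFinrank ![e, F e]
    (by rw [Matrix.range_cons_cons_empty, hspan]) (by rw [Fintype.card_fin, hrank])
  have h0 : bas 0 = e := by simp [bas]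
  have h1 : bas 1 = F e := by simp [bas]
  exact ⟨bas, by rw [h0, h1], by rw [h0, h1, hFe], by rw [h0, h1, hFe, hFV],
    by rw [h0, h1, hVF]⟩

end Dieudonne

open Polynomial in
lemma IsAlgClosed.exists_mul_pow_sub_eq {k : Type*} [Field k] [IsAlgClosed k] {a : k}
    (ha : a ≠ 0) {n : ℕ} (hn : 2 ≤ n) (c : k) : ∃ x, a * x ^ n - x = c := by
  have hdeg : (C a * X ^ n - X - C c).natDegree = n := by
    compute_degree!
    · simpa [show 1 ≠ n by omega, show n ≠ 0 by omega] using ha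
    · omega
  obtain ⟨x, hx⟩ := IsAlgClosed.exists_root (C a * X ^ n - X - C c)
    (natDegree_pos_iff_degree_pos.mp (by omega)).ne'
  exact ⟨x, by simpa [sub_eq_zero] using hx⟩

lemma IsAlgClosed.exists_ne_zero_mul_pow_eq_self {k : Type*} [Field k] [IsAlgClosed k] {a : k}
    (ha : a ≠ 0) {n : ℕ} (hn : 2 ≤ n) : ∃ x ≠ 0, a * x ^ n = x := by
  obtain ⟨x, hx⟩ := IsAlgClosed.exists_pow_nat_eq a⁻¹ (by omega : 0 < n - 1)
  have hx0 : x ≠ 0 := by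
    rintro rfl
    rw [zero_pow (by omega : n - 1 ≠ 0), zero_eq_inv] at hx
    exact ha hx.symm
  refine ⟨x, hx0, ?_⟩
  rw [show n = n - 1 + 1 by omega, pow_succ, hx, ← mul_assoc, mul_inv_cancel₀ ha, one_mul]

namespace WittVector

variable {p : ℕ} [Fact p.Prime] {k : Type*} [Field k] [CharP k p]

local notation "𝕎" => WittVector p
local notation "σ" => frobeniusEquiv p k

lemma constantCoeff_frobeniusEquiv [PerfectRing k p] (x : 𝕎 k) :
    constantCoeff (σ x) = constantCoeff x ^ p :=
  coeff_frobenius_charP (p := p) x 0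

lemma mem_span_p_iff_constantCoeff_eq_zero [PerfectRing k p] {x : 𝕎 k} :
    x ∈ Ideal.span {(p : 𝕎 k)} ↔ constantCoeff x = 0 := by
  rw [← ker_constantCoeff, RingHom.mem_ker]

variable [IsAlgClosed k]

lemma exists_mul_frobeniusEquiv_sq_sub_sub_mem {a : 𝕎 k} (ha : constantCoeff a ≠ 0) (c : 𝕎 k) :
    ∃ s, a * σ (σ s) - s - c ∈ Ideal.span {(p : 𝕎 k)} := by
  obtain ⟨x, hx⟩ := IsAlgClosed.exists_mul_pow_sub_eq ha
    (Nat.mul_le_mul (Fact.out : p.Prime).two_le (Fact.out : p.Prime).one_le) (constantCoeff c)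
  obtain ⟨s, rfl⟩ := constantCoeff_surjective p x
  refine ⟨s, mem_span_p_iff_constantCoeff_eq_zero.mpr ?_⟩
  simp only [map_sub, map_mul, constantCoeff_frobeniusEquiv, ← pow_mul, hx, sub_self]

lemma exists_constantCoeff_ne_zero_mul_frobeniusEquiv_sq_sub_mem {a : 𝕎 k}
    (ha : constantCoeff a ≠ 0) :
    ∃ s, constantCoeff s ≠ 0 ∧ a * σ (σ s) - s ∈ Ideal.span {(p : 𝕎 k)} := by
  obtain ⟨x, hx0, hx⟩ := IsAlgClosed.exists_ne_zero_mul_pow_eq_self ha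
    (Nat.mul_le_mul (Fact.out : p.Prime).two_le (Fact.out : p.Prime).one_le)
  obtain ⟨s, rfl⟩ := constantCoeff_surjective p x
  refine ⟨s, hx0, mem_span_p_iff_constantCoeff_eq_zero.mpr ?_⟩
  simp only [map_sub, map_mul, constantCoeff_frobeniusEquiv, ← pow_mul, hx, sub_self]

variable {M : Type*} [AddCommGroup M] [Module (WittVector p k) M]
  {F : M →ₛₗ[(frobeniusEquiv p k : WittVector p k →+* WittVector p k)] M}
  {Ψ : M →ₛₗ[(((frobeniusEquiv p k).trans (frobeniusEquiv p k) :
    WittVector p k ≃+* WittVector p k) : WittVector p k →+* WittVector p k)] M}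
  {x₀ : M} {a b : WittVector p k}

local notation "pM" => Ideal.span {(p : 𝕎 k)} • (⊤ : Submodule (𝕎 k) M)

lemma exists_eq_smul_add_smul_constantCoeff_ne_zero (hspan : span (𝕎 k) {x₀, F x₀} = ⊤)
    (hpF : pM ≤ LinearMap.range F) {y : M} (hy : y ∉ LinearMap.range F) :
    ∃ a b : 𝕎 k, y = a • x₀ + b • F x₀ ∧ constantCoeff a ≠ 0 := by
  obtain ⟨a, b, rfl⟩ := mem_span_pair.mp (hspan ▸ mem_top : y ∈ span (𝕎 k) {x₀, F x₀})
  refine ⟨a, b, rfl, fun ha => hy (add_mem (hpF (smul_mem_smul ?_ mem_top))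
    (smul_mem _ _ (LinearMap.mem_range_self F x₀)))⟩
  exact mem_span_p_iff_constantCoeff_eq_zero.mpr ha

lemma sub_smodEq_of_coeffs (hΨx₀ : Ψ x₀ = a • x₀ + b • F x₀) (hΨF : Ψ (F x₀) = F (Ψ x₀))
    (hFF : F (F x₀) ∈ pM) {s t c₁ c₂ : 𝕎 k}
    (h₁ : a * σ (σ s) - s - c₁ ∈ Ideal.span {(p : 𝕎 k)})
    (h₂ : b * σ (σ s) + σ a * σ (σ t) - t - c₂ ∈ Ideal.span {(p : 𝕎 k)}) :
    Ψ (s • x₀ + t • F x₀) - (s • x₀ + t • F x₀) ≡ c₁ • x₀ + c₂ • F x₀ [SMOD pM] := by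
  have h : Ψ (s • x₀ + t • F x₀) - (s • x₀ + t • F x₀) - (c₁ • x₀ + c₂ • F x₀) =
      (a * σ (σ s) - s - c₁) • x₀ + (b * σ (σ s) + σ a * σ (σ t) - t - c₂) • F x₀ +
        (σ (σ t) * σ b) • F (F x₀) := by
    simp only [map_add, map_smulₛₗ, hΨF, hΨx₀, RingEquiv.coe_toRingHom, RingEquiv.trans_apply]
    module
  rw [SModEq.sub_mem, h]
  exact add_mem (add_mem (smul_mem_smul h₁ mem_top) (smul_mem_smul h₂ mem_top))
    (smul_mem _ _ hFF)

lemma exists_sub_smodEq_of_coeff (hΨx₀ : Ψ x₀ = a • x₀ + b • F x₀) (ha : constantCoeff a ≠ 0)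
    (hΨF : Ψ (F x₀) = F (Ψ x₀)) (hFF : F (F x₀) ∈ pM) {s c₁ : 𝕎 k} (c₂ : 𝕎 k)
    (h₁ : a * σ (σ s) - s - c₁ ∈ Ideal.span {(p : 𝕎 k)}) :
    ∃ t : 𝕎 k, Ψ (s • x₀ + t • F x₀) - (s • x₀ + t • F x₀) ≡ c₁ • x₀ + c₂ • F x₀ [SMOD pM] := by
  have hσa : constantCoeff (σ a) ≠ 0 := by
    rw [constantCoeff_frobeniusEquiv]
    exact pow_ne_zero _ ha
  obtain ⟨t, ht⟩ := exists_mul_frobeniusEquiv_sq_sub_sub_mem hσa (c₂ - b * σ (σ s))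
  refine ⟨t, sub_smodEq_of_coeffs hΨx₀ hΨF hFF h₁ ?_⟩
  convert ht using 1
  ring

lemma forall_exists_sub_smodEq (hspan : span (𝕎 k) {x₀, F x₀} = ⊤)
    (hΨx₀ : Ψ x₀ = a • x₀ + b • F x₀) (ha : constantCoeff a ≠ 0) (hΨF : Ψ (F x₀) = F (Ψ x₀))
    (hFF : F (F x₀) ∈ pM) (c : M) : ∃ x, Ψ x - x ≡ c [SMOD pM] := by
  obtain ⟨c₁, c₂, rfl⟩ := mem_span_pair.mp (hspan ▸ mem_top : c ∈ span (𝕎 k) {x₀, F x₀})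
  obtain ⟨s, hs⟩ := exists_mul_frobeniusEquiv_sq_sub_sub_mem ha c₁
  obtain ⟨t, ht⟩ := exists_sub_smodEq_of_coeff hΨx₀ ha hΨF hFF c₂ hs
  exact ⟨_, ht⟩

lemma exists_notMem_range_smodEq (hx₀ : x₀ ∉ LinearMap.range F)
    (hΨx₀ : Ψ x₀ = a • x₀ + b • F x₀) (ha : constantCoeff a ≠ 0) (hΨF : Ψ (F x₀) = F (Ψ x₀))
    (hFF : F (F x₀) ∈ pM) : ∃ e₀ ∉ LinearMap.range F, Ψ e₀ ≡ e₀ [SMOD pM] := by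
  obtain ⟨s, hs0, hs⟩ := exists_constantCoeff_ne_zero_mul_frobeniusEquiv_sq_sub_mem ha
  obtain ⟨t, ht⟩ := exists_sub_smodEq_of_coeff hΨx₀ ha hΨF hFF 0 (by rwa [sub_zero])
  refine ⟨s • x₀ + t • F x₀, fun he₀ => hx₀ ?_, ?_⟩
  · obtain ⟨u, hu⟩ := (isUnit_of_coeff_zero_ne_zero s hs0).exists_left_inv
    have : s • x₀ ∈ LinearMap.range F :=
      (add_sub_cancel_right (s • x₀) (t • F x₀)) ▸
        sub_mem he₀ (smul_mem _ _ (LinearMap.mem_range_self F x₀))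
    rw [← one_smul (𝕎 k) x₀, ← hu, ← smul_smul]
    exact smul_mem _ u this
  · rw [SModEq.sub_mem, zero_smul, zero_smul, add_zero, sub_zero] at ht
    exact SModEq.sub_mem.mpr ht

theorem exists_apply_eq_apply_span_pair_eq_top [Module.Free (𝕎 k) M] [Module.Finite (𝕎 k) M]
    {V : M →ₛₗ[((σ).symm : 𝕎 k →+* 𝕎 k)] M}
    (hFV : ∀ x, F (V x) = (p : 𝕎 k) • x) (hVF : ∀ x, V (F x) = (p : 𝕎 k) • x)
    (hrange : LinearMap.range F = LinearMap.range V) (hcoatom : IsCoatom (LinearMap.range F)) :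
    ∃ e, F e = V e ∧ span (𝕎 k) {e, F e} = ⊤ := by
  have hpirr := irreducible p (k := k)
  have hπ : IsSMulRegular M (p : 𝕎 k) := IsSMulRegular.of_ne_zero hpirr.ne_zero
  have hpF := ideal_span_singleton_smul_top_le_range F (B := V) hFV
  have hFF : ∀ m, F (F m) ∈ pM := by
    rw [← span_range_apply_apply_eq_of_range_eq hFV hrange]
    exact fun m => subset_span ⟨m, rfl⟩
  have hpmax : (p : 𝕎 k) ∈ IsLocalRing.maximalIdeal _ := hpirr.not_isUnit
  obtain ⟨x₀, -, hx₀⟩ := SetLike.exists_of_lt (lt_top_iff_ne_top.mpr hcoatom.1)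
  have hspan₀ := span_pair_eq_top_of_notMem_range hpmax hcoatom hFF hx₀
  obtain ⟨Ψ, hΨ⟩ := exists_apply_eq_of_range_le hFV hπ hrange.le
  have hΨF := apply_apply_comm_of_apply_eq hFV hVF hπ hΨ
  obtain ⟨a, b, hab, ha⟩ := exists_eq_smul_add_smul_constantCoeff_ne_zero hspan₀ hpF
    (apply_notMem_range_of_surjective hspan₀ (surjective_of_apply_eq hFV hπ hrange.ge hΨ) hΨF hx₀)
  obtain ⟨e₀, he₀F, he₀⟩ := exists_notMem_range_smodEq hx₀ hab ha (hΨF x₀) (hFF x₀)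
  have := (Module.Free.chooseBasis (𝕎 k) M).isAdicComplete (Ideal.span {(p : 𝕎 k)})
  obtain ⟨e, hΨe, hee₀⟩ := exists_map_eq_self_smodEq_of_forall_exists_sub_smodEq
    Ψ.toAddMonoidHom (fun m => by simp only [LinearMap.toAddMonoidHom_coe, map_smulₛₗ, map_natCast])
    (forall_exists_sub_smodEq hspan₀ hab ha (hΨF x₀) (hFF x₀)) he₀
  have he : e ∉ LinearMap.range F := fun h =>
    he₀F (sub_sub_cancel e e₀ ▸ sub_mem h (hpF (SModEq.sub_mem.mp hee₀)))
  exact ⟨e, by rw [← hΨ e, show Ψ e = e from hΨe],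
    span_pair_eq_top_of_notMem_range hpmax hcoatom hFF he⟩

end WittVector

theorem stmt12_general (p : ℕ) [Fact p.Prime] (k : Type*) [Field k] [IsAlgClosed k] [CharP k p]
    (M : Type*) [AddCommGroup M] [Module (WittVector p k) M]
    [Module.Free (WittVector p k) M] [Module.Finite (WittVector p k) M]
    (hrank : Module.finrank (WittVector p k) M = 2)
    (F V : M → M)
    (hFadd : ∀ x y, F (x + y) = F x + F y)
    (hFsmul : ∀ (a : WittVector p k) (x : M),
      F (a • x) = (WittVector.frobeniusEquiv p k a) • F x)
    (hVadd : ∀ x y, V (x + y) = V x + V y)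
    (hVsmul : ∀ (a : WittVector p k) (x : M),
      V (a • x) = ((WittVector.frobeniusEquiv p k).symm a) • V x)
    (hFV : ∀ x, F (V x) = (p : WittVector p k) • x)
    (hVF : ∀ x, V (F x) = (p : WittVector p k) • x)
    (hdimF : Nonempty ((M ⧸ Submodule.span (WittVector p k) (Set.range F)) ≃ₗ[WittVector p k]
      (WittVector p k ⧸ (Ideal.span {(p : WittVector p k)}))))
    (hss : Submodule.span (WittVector p k) (Set.range F)
        ⊔ (Ideal.span {(p : WittVector p k)} • (⊤ : Submodule (WittVector p k) M))
      = Submodule.span (WittVector p k) (Set.range V)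
        ⊔ (Ideal.span {(p : WittVector p k)} • (⊤ : Submodule (WittVector p k) M))) :
    Submodule.span (WittVector p k) (Set.range fun x => F (F x))
      = Ideal.span {(p : WittVector p k)} • (⊤ : Submodule (WittVector p k) M) ∧
    ∃ bas : Module.Basis (Fin 2) (WittVector p k) M,
      F (bas 0) = bas 1 ∧ V (bas 0) = bas 1 ∧
      F (bas 1) = (p : WittVector p k) • bas 0 ∧ V (bas 1) = (p : WittVector p k) • bas 0 := by
  let F' : M →ₛₗ[(WittVector.frobeniusEquiv p k : WittVector p k →+* WittVector p k)] M :=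
    { toFun := F, map_add' := hFadd, map_smul' := hFsmul }
  let V' : M →ₛₗ[((WittVector.frobeniusEquiv p k).symm : WittVector p k →+* WittVector p k)] M :=
    { toFun := V, map_add' := hVadd, map_smul' := hVsmul }
  have hF : span (WittVector p k) (Set.range F) = LinearMap.range F' :=
    span_eq (LinearMap.range F')
  have hV : span (WittVector p k) (Set.range V) = LinearMap.range V' :=
    span_eq (LinearMap.range V')
  rw [hF, hV, sup_eq_left.mpr (ideal_span_singleton_smul_top_le_range F' hFV),
    sup_eq_left.mpr (ideal_span_singleton_smul_top_le_range V' hVF)] at hss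
  have : (Ideal.span {(p : WittVector p k)}).IsMaximal :=
    PrincipalIdealRing.isMaximal_of_irreducible (WittVector.irreducible p)
  obtain ⟨eF⟩ := hdimF
  rw [hF] at eF
  obtain ⟨e, hFe, hspan⟩ := WittVector.exists_apply_eq_apply_span_pair_eq_top hFV hVF hss
    (isCoatom_of_quotient_linearEquiv eF)
  exact ⟨span_range_apply_apply_eq_of_range_eq hFV hss,
    exists_basis_of_apply_eq_apply hFV hVF hrank hFe hspan⟩

/-- supersingular case of the rank-2 classification: same setup as the
ordinary case, but assuming `F(M/pM) = V(M/pM)`.  Then `F²M = pM` and `M` is isomorphic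
to `M₂`: there is a `W`-basis `e₀, e₁` with `Fe₀ = Ve₀ = e₁` and `Fe₁ = Ve₁ = pe₀`. -/
theorem stmt12 (p : ℕ) [Fact p.Prime] (k : Type*) [Field k] [IsAlgClosed k] [CharP k p]
    (M : Type*) [AddCommGroup M] [Module (WittVector p k) M]
    [Module.Free (WittVector p k) M] [Module.Finite (WittVector p k) M]
    (hrank : Module.finrank (WittVector p k) M = 2)
    (F V : M → M)
    (hFadd : ∀ x y, F (x + y) = F x + F y)
    (hFsmul : ∀ (a : WittVector p k) (x : M),
      F (a • x) = (WittVector.frobeniusEquiv p k a) • F x)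
    (hVadd : ∀ x y, V (x + y) = V x + V y)
    (hVsmul : ∀ (a : WittVector p k) (x : M),
      V (a • x) = ((WittVector.frobeniusEquiv p k).symm a) • V x)
    (hFV : ∀ x, F (V x) = (p : WittVector p k) • x)
    (hVF : ∀ x, V (F x) = (p : WittVector p k) • x)
    (hdimF : Nonempty ((M ⧸ Submodule.span (WittVector p k) (Set.range F)) ≃ₗ[WittVector p k]
      (WittVector p k ⧸ (Ideal.span {(p : WittVector p k)}))))
    (hdimV : Nonempty ((M ⧸ Submodule.span (WittVector p k) (Set.range V)) ≃ₗ[WittVector p k]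
      (WittVector p k ⧸ (Ideal.span {(p : WittVector p k)}))))
    (hss : Submodule.span (WittVector p k) (Set.range F)
        ⊔ (Ideal.span {(p : WittVector p k)} • (⊤ : Submodule (WittVector p k) M))
      = Submodule.span (WittVector p k) (Set.range V)
        ⊔ (Ideal.span {(p : WittVector p k)} • (⊤ : Submodule (WittVector p k) M))) :
    Submodule.span (WittVector p k) (Set.range fun x => F (F x))
      = Ideal.span {(p : WittVector p k)} • (⊤ : Submodule (WittVector p k) M) ∧
    ∃ bas : Module.Basis (Fin 2) (WittVector p k) M,
      F (bas 0) = bas 1 ∧ V (bas 0) = bas 1 ∧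
      F (bas 1) = (p : WittVector p k) • bas 0 ∧ V (bas 1) = (p : WittVector p k) • bas 0 :=
  stmt12_general p k M hrank F V hFadd hFsmul hVadd hVsmul hFV hVF hdimF hss
end
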